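/- The Kramers-Wannier identity on operators: letting V = (H⊗H⊗...⊗H) · StC_N with H the Hadamard gate applied to each qubit after the stacked CNOT, one has V X_n V† = Z_n Z_{n+1} for all n with -N ≤ n ≤ N-1. -/

import Mathlib

open Matrix
open scoped Classical
open Fin.NatCast

instance chainNeZero (N : ℕ) : NeZero (2 * N + 2) := ⟨by omega⟩

/-- The Pauli `X` matrix. -/
def PX : Matrix (Fin 2) (Fin 2) ℂ := !![0, 1; 1, 0]

/-- The Pauli `Z` matrix. -/
def PZ : Matrix (Fin 2) (Fin 2) ℂ := !![1, 0; 0, -1]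

/-- The Hadamard gate `H = (1/√2)[[1,1],[1,-1]]`. -/
noncomputable def hadamard : Matrix (Fin 2) (Fin 2) ℂ :=
  Matrix.of fun a b => ((Real.sqrt 2 : ℂ))⁻¹ * (if a = 1 ∧ b = 1 then -1 else 1)

/-- A single-qubit operator `M` on site `k` of a chain of `2N+2` qubits (sites
`0, …, 2N+1` represent `-N, …, N+1`), tensored with the identity elsewhere. -/
noncomputable def siteOp (N : ℕ) (k : Fin (2 * N + 2)) (M : Matrix (Fin 2) (Fin 2) ℂ) :
    Matrix (Fin (2 * N + 2) → Fin 2) (Fin (2 * N + 2) → Fin 2) ℂ :=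
  Matrix.of fun f g => if ∀ j, j ≠ k → f j = g j then M (f k) (g k) else 0

/-- The CNOT gate with control `k` and target `k'`, identity elsewhere. -/
noncomputable def cnotGate (N : ℕ) (k k' : Fin (2 * N + 2)) :
    Matrix (Fin (2 * N + 2) → Fin 2) (Fin (2 * N + 2) → Fin 2) ℂ :=
  Matrix.of fun f g =>
    if f k = g k ∧ f k' = g k + g k' ∧ ∀ j, j ≠ k → j ≠ k' → f j = g j then 1 else 0

/-- The stacked CNOT circuit `StC_N = C_{-N} ⋯ C_N` (shifted coordinates), with `C_N`
acting first. -/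
noncomputable def stackedCNOT (N : ℕ) :
    Matrix (Fin (2 * N + 2) → Fin 2) (Fin (2 * N + 2) → Fin 2) ℂ :=
  ((List.range (2 * N + 1)).map
    (fun k => cnotGate N (k : Fin (2 * N + 2)) ((k + 1 : ℕ) : Fin (2 * N + 2)))).prod

/-- The layer of Hadamard gates applied to every qubit of the chain. -/
noncomputable def hadamardLayer (N : ℕ) :
    Matrix (Fin (2 * N + 2) → Fin 2) (Fin (2 * N + 2) → Fin 2) ℂ :=
  Matrix.of fun f g => ∏ j, hadamard (f j) (g j)

/-- The Kramers–Wannier transformation `V`: the stacked CNOT circuit followed by a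
Hadamard gate on every qubit. -/
noncomputable def KW (N : ℕ) :
    Matrix (Fin (2 * N + 2) → Fin 2) (Fin (2 * N + 2) → Fin 2) ℂ :=
  hadamardLayer N * stackedCNOT N

namespace KWaux

/-- sign of a bit -/
def sgn (a : Fin 2) : ℂ := if a = 1 then -1 else 1

/-- flip coordinate k -/
def flip (N : ℕ) (k : Fin (2*N+2)) (g : Fin (2*N+2) → Fin 2) : Fin (2*N+2) → Fin 2 :=
  fun j => if j = k then g j + 1 else g j

/-- partial difference operator -/
def Dm (N m : ℕ) (g : Fin (2*N+2) → Fin 2) : Fin (2*N+2) → Fin 2 :=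
  fun j => if 1 ≤ (j:ℕ) ∧ (j:ℕ) ≤ m then
    g j + g ⟨(j:ℕ)-1, lt_of_le_of_lt (Nat.sub_le _ _) j.isLt⟩ else g j

lemma cnot_apply {N : ℕ} (k k' : Fin (2*N+2)) (hkk : k ≠ k') (f g : Fin (2*N+2) → Fin 2) :
    cnotGate N k k' f g = if f = (fun j => if j = k' then g k + g k' else g j) then 1 else 0 := by
  unfold cnotGate
  rw [Matrix.of_apply]
  congr 1
  simp only [eq_iff_iff]
  constructor
  · rintro ⟨h1, h2, h3⟩
    funext j
    by_cases hj' : j = k'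
    · subst hj'; simp [h2]
    · by_cases hj : j = k
      · subst hj; simp [hj', h1, if_neg hkk]
      · simp [hj', h3 j hj hj']
  · intro h
    have hc := fun j => congrFun h j
    refine ⟨?_, ?_, ?_⟩
    · have := hc k; simpa [if_neg hkk] using this
    · have := hc k'; simpa using this
    · intro j hj hj'
      have := hc j; simpa [hj'] using this

lemma PX_apply (a b : Fin 2) : PX a b = if a = b + 1 then 1 else 0 := by
  fin_cases a <;> fin_cases b <;> simp [PX]

lemma PZ_apply (a b : Fin 2) : PZ a b = if a = b then sgn b else 0 := by
  fin_cases a <;> fin_cases b <;> simp [PZ, sgn]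

lemma siteX {N : ℕ} (k : Fin (2*N+2)) (f g : Fin (2*N+2) → Fin 2) :
    siteOp N k PX f g = if f = flip N k g then 1 else 0 := by
  unfold siteOp
  rw [Matrix.of_apply]
  by_cases hfg : ∀ j, j ≠ k → f j = g j
  · rw [if_pos hfg, PX_apply]
    congr 1
    simp only [eq_iff_iff]
    constructor
    · intro h
      funext j
      by_cases hj : j = k
      · subst hj; simp [flip, h]
      · simp [flip, hj, hfg j hj]
    · intro h
      have := congrFun h k
      simpa [flip] using this
  · rw [if_neg hfg, if_neg]
    intro h
    apply hfg
    intro j hj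
    have := congrFun h j
    simpa [flip, hj] using this

lemma siteZ {N : ℕ} (k : Fin (2*N+2)) (f g : Fin (2*N+2) → Fin 2) :
    siteOp N k PZ f g = if f = g then sgn (g k) else 0 := by
  unfold siteOp
  rw [Matrix.of_apply]
  by_cases hfg : ∀ j, j ≠ k → f j = g j
  · rw [if_pos hfg, PZ_apply]
    congr 1
    · simp only [eq_iff_iff]
      constructor
      · intro h
        funext j
        by_cases hj : j = k
        · subst hj; exact h
        · exact hfg j hj
      · intro h; exact congrFun h k
  · rw [if_neg hfg, if_neg]
    intro h
    exact hfg fun j _ => (congrFun h j)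


noncomputable def partialStC (N m : ℕ) :
    Matrix (Fin (2 * N + 2) → Fin 2) (Fin (2 * N + 2) → Fin 2) ℂ :=
  ((List.range m).map
    (fun k => cnotGate N (k : Fin (2 * N + 2)) ((k + 1 : ℕ) : Fin (2 * N + 2)))).prod

lemma partial_apply {N : ℕ} : ∀ m, m ≤ 2*N+1 → ∀ f g,
    partialStC N m f g = if f = Dm N m g then 1 else 0 := by
  intro m
  induction m with
  | zero =>
    intro _ f g
    have hD : Dm N 0 g = g := by
      funext j; simp only [Dm]; rw [if_neg (by omega)]
    simp [partialStC, hD, Matrix.one_apply]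
  | succ m ih =>
    intro hm f g
    have hmlt : m < 2*N+2 := by omega
    have hm1lt : m+1 < 2*N+2 := by omega
    have hKv : ((m : Fin (2*N+2)) : ℕ) = m := Fin.val_cast_of_lt hmlt
    have hK'v : (((m+1 : ℕ) : Fin (2*N+2)) : ℕ) = m+1 := Fin.val_cast_of_lt hm1lt
    have hkk : (m : Fin (2*N+2)) ≠ ((m+1 : ℕ) : Fin (2*N+2)) := by
      intro h; apply_fun Fin.val at h; omega
    have hsplit : partialStC N (m+1)
        = partialStC N m * cnotGate N (m : Fin (2*N+2)) ((m+1:ℕ) : Fin (2*N+2)) := by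
      unfold partialStC
      rw [List.range_succ]
      simp [hKv]
    set φg : Fin (2*N+2) → Fin 2 := fun j => if j = ((m+1:ℕ) : Fin (2*N+2))
      then g (m : Fin (2*N+2)) + g ((m+1:ℕ) : Fin (2*N+2)) else g j with hφg
    rw [hsplit, Matrix.mul_apply]
    simp_rw [cnot_apply _ _ hkk, mul_ite, mul_one, mul_zero, ← hφg]
    rw [Finset.sum_ite_eq' Finset.univ φg, if_pos (Finset.mem_univ _), ih (by omega)]
    have hD : Dm N m φg = Dm N (m+1) g := by
      funext j
      simp only [Dm]
      by_cases h1 : (j:ℕ) = m+1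
      · have hj : j = ((m+1:ℕ) : Fin (2*N+2)) := Fin.ext (by omega)
        have hpred : (⟨(j:ℕ)-1, lt_of_le_of_lt (Nat.sub_le _ _) j.isLt⟩ : Fin (2*N+2))
            = (m : Fin (2*N+2)) := Fin.ext (by simp only [hKv]; omega)
        rw [if_neg (by omega), if_pos (by omega), hpred, hφg]
        simp only [hj, if_pos rfl]
        exact add_comm _ _
      · have hjne : j ≠ ((m+1:ℕ) : Fin (2*N+2)) := fun h => h1 (by rw [h, hK'v])
        by_cases h2 : 1 ≤ (j:ℕ) ∧ (j:ℕ) ≤ m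
        · have hpredne : (⟨(j:ℕ)-1, lt_of_le_of_lt (Nat.sub_le _ _) j.isLt⟩ : Fin (2*N+2))
              ≠ ((m+1:ℕ) : Fin (2*N+2)) := by
            intro h; apply_fun Fin.val at h; simp only [hK'v] at h; omega
          rw [if_pos h2, if_pos (by omega), hφg]
          simp only [if_neg hjne, if_neg hpredne]
        · rw [if_neg h2, if_neg (by omega), hφg]
          simp only [if_neg hjne]
    rw [hD]


lemma stC_apply {N : ℕ} (f g : Fin (2*N+2) → Fin 2) :
    stackedCNOT N f g = if f = Dm N (2*N+1) g then 1 else 0 := by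
  have : stackedCNOT N = partialStC N (2*N+1) := rfl
  rw [this, partial_apply (2*N+1) le_rfl]

lemma fin2_cancel : ∀ a b c : Fin 2, a + c = b + c → a = b := by decide

lemma D_inj {N : ℕ} : Function.Injective (Dm N (2*N+1)) := by
  intro g g' h
  have key : ∀ v : ℕ, ∀ j : Fin (2*N+2), (j:ℕ) = v → g j = g' j := by
    intro v
    induction v using Nat.strong_induction_on with
    | _ v ih =>
      intro j hj
      have hc := congrFun h j
      simp only [Dm] at hc
      by_cases h0 : 1 ≤ (j:ℕ)
      · have hcond : 1 ≤ (j:ℕ) ∧ (j:ℕ) ≤ 2*N+1 := ⟨h0, by omega⟩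
        rw [if_pos hcond, if_pos hcond] at hc
        have hpred := ih ((j:ℕ)-1) (by omega)
          ⟨(j:ℕ)-1, lt_of_le_of_lt (Nat.sub_le _ _) j.isLt⟩ rfl
        rw [hpred] at hc
        exact fin2_cancel _ _ _ hc
      · rwa [if_neg (by omega), if_neg (by omega)] at hc
  exact funext fun j => key (j:ℕ) j rfl

lemma H_symm (a b : Fin 2) : _root_.hadamard a b = _root_.hadamard b a := by
  simp only [_root_.hadamard, Matrix.of_apply, and_comm]

lemma H_real (a b : Fin 2) : star (_root_.hadamard a b) = _root_.hadamard a b := by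
  simp only [_root_.hadamard, Matrix.of_apply, star_mul', star_inv₀, Complex.star_def,
    Complex.conj_ofReal, apply_ite (starRingEnd ℂ), map_neg, _root_.map_one]

lemma H_flip (a b : Fin 2) : _root_.hadamard a (b + 1) = sgn a * _root_.hadamard a b := by
  fin_cases a <;> fin_cases b <;> simp [_root_.hadamard, sgn] <;> ring

lemma H_mul_H (a c : Fin 2) :
    (∑ b : Fin 2, _root_.hadamard a b * _root_.hadamard b c) = if a = c then 1 else 0 := by
  have h2 : ((Real.sqrt 2 : ℝ) : ℂ) * ((Real.sqrt 2 : ℝ) : ℂ) = 2 := by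
    norm_cast
    rw [Real.mul_self_sqrt] <;> norm_num
  have hinv : ((Real.sqrt 2 : ℝ) : ℂ)⁻¹ * ((Real.sqrt 2 : ℝ) : ℂ)⁻¹ = (2:ℂ)⁻¹ := by
    rw [← mul_inv, h2]
  fin_cases a <;> fin_cases c <;>
    simp [Fin.sum_univ_two, _root_.hadamard] <;> ring_nf <;>
    rw [show ((Real.sqrt 2 : ℝ) : ℂ)⁻¹ ^ 2 = ((Real.sqrt 2:ℝ):ℂ)⁻¹ * ((Real.sqrt 2:ℝ):ℂ)⁻¹ from sq _] <;>
    rw [hinv] <;> norm_num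

lemma HL_herm {N : ℕ} : (hadamardLayer N)ᴴ = hadamardLayer N := by
  ext f g
  rw [Matrix.conjTranspose_apply]
  simp only [hadamardLayer, Matrix.of_apply]
  rw [show star (∏ j, _root_.hadamard (g j) (f j)) = (starRingEnd ℂ) (∏ j, _root_.hadamard (g j) (f j)) from rfl,
    map_prod]
  exact Finset.prod_congr rfl fun j _ => by
    rw [show (starRingEnd ℂ) (_root_.hadamard (g j) (f j)) = star (_root_.hadamard (g j) (f j)) from rfl,
      H_real, H_symm]

lemma HL_mul_HL {N : ℕ} : hadamardLayer N * hadamardLayer N = 1 := by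
  ext f g
  rw [Matrix.mul_apply]
  simp only [hadamardLayer, Matrix.of_apply]
  have hpt : ∀ h : Fin (2*N+2) → Fin 2,
      (∏ j, _root_.hadamard (f j) (h j)) * ∏ j, _root_.hadamard (h j) (g j)
        = ∏ j, (_root_.hadamard (f j) (h j) * _root_.hadamard (h j) (g j)) :=
    fun h => (Finset.prod_mul_distrib).symm
  simp_rw [hpt]
  rw [← Fintype.piFinset_univ]
  have hps := Finset.prod_univ_sum (fun _ : Fin (2*N+2) => (Finset.univ : Finset (Fin 2)))
    (fun j b => _root_.hadamard (f j) b * _root_.hadamard b (g j))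
  rw [← hps]
  simp_rw [H_mul_H]
  rw [Finset.prod_boole, Matrix.one_apply]
  congr 1
  simp [funext_iff]

lemma StC_mul_conj {N : ℕ} : stackedCNOT N * (stackedCNOT N)ᴴ = 1 := by
  ext f g
  rw [Matrix.mul_apply]
  simp_rw [Matrix.conjTranspose_apply, stC_apply, apply_ite (star : ℂ → ℂ), star_one, star_zero]
  have hbij : Function.Bijective (Dm N (2*N+1)) :=
    Finite.injective_iff_bijective.mp D_inj
  let e := Equiv.ofBijective _ hbij
  rw [show (∑ h, (if f = Dm N (2*N+1) h then (1:ℂ) else 0) * (if g = Dm N (2*N+1) h then 1 else 0))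
      = ∑ h, (if f = e h then (1:ℂ) else 0) * (if g = e h then 1 else 0) from rfl,
    Equiv.sum_comp e (fun b => (if f = b then (1:ℂ) else 0) * (if g = b then 1 else 0))]
  have hpt : ∀ b, (if f = b then (1:ℂ) else 0) * (if g = b then 1 else 0)
      = if f = b then (if g = b then (1:ℂ) else 0) else 0 := by
    intro b; split_ifs <;> simp
  simp_rw [hpt]
  rw [Finset.sum_ite_eq Finset.univ f, if_pos (Finset.mem_univ _), Matrix.one_apply]
  by_cases h : f = g <;> simp [h, eq_comm]

lemma KW_mul_conj {N : ℕ} : KW N * (KW N)ᴴ = 1 := by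
  rw [KW, Matrix.conjTranspose_mul]
  calc hadamardLayer N * stackedCNOT N * ((stackedCNOT N)ᴴ * (hadamardLayer N)ᴴ)
      = hadamardLayer N * (stackedCNOT N * (stackedCNOT N)ᴴ) * (hadamardLayer N)ᴴ := by
        rw [Matrix.mul_assoc, Matrix.mul_assoc, Matrix.mul_assoc]
    _ = 1 := by rw [StC_mul_conj, Matrix.mul_one, HL_herm, HL_mul_HL]



lemma Z_mul_apply {N : ℕ} (k : Fin (2*N+2))
    (M : Matrix (Fin (2 * N + 2) → Fin 2) (Fin (2 * N + 2) → Fin 2) ℂ)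
    (f g : Fin (2*N+2) → Fin 2) :
    (siteOp N k PZ * M) f g = sgn (f k) * M f g := by
  rw [Matrix.mul_apply]
  simp_rw [siteZ, ite_mul, zero_mul]
  rw [Finset.sum_ite_eq Finset.univ f]
  simp

lemma mulX_apply {N : ℕ}
    (M : Matrix (Fin (2 * N + 2) → Fin 2) (Fin (2 * N + 2) → Fin 2) ℂ)
    (k : Fin (2*N+2)) (f g : Fin (2*N+2) → Fin 2) :
    (M * siteOp N k PX) f g = M f (flip N k g) := by
  rw [Matrix.mul_apply]
  simp_rw [siteX, mul_ite, mul_one, mul_zero]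
  rw [Finset.sum_ite_eq' Finset.univ (flip N k g)]
  simp

lemma KW_apply {N : ℕ} (f g : Fin (2*N+2) → Fin 2) :
    KW N f g = ∏ j, _root_.hadamard (f j) (Dm N (2*N+1) g j) := by
  rw [KW, Matrix.mul_apply]
  simp_rw [stC_apply, hadamardLayer, Matrix.of_apply, mul_ite, mul_one, mul_zero]
  rw [Finset.sum_ite_eq' Finset.univ (Dm N (2*N+1) g)]
  simp

lemma D_flip {N n : ℕ} (hn : n + 1 ≤ 2*N) (g : Fin (2*N+2) → Fin 2) :
    Dm N (2*N+1) (flip N (n : Fin (2*N+2)) g)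
      = flip N ((n+1 : ℕ) : Fin (2*N+2)) (flip N (n : Fin (2*N+2)) (Dm N (2*N+1) g)) := by
  have hnlt : n < 2*N+2 := by omega
  have hn1lt : n+1 < 2*N+2 := by omega
  have hKv : ((n : Fin (2*N+2)) : ℕ) = n := Fin.val_cast_of_lt hnlt
  have hK'v : (((n+1:ℕ) : Fin (2*N+2)) : ℕ) = n+1 := Fin.val_cast_of_lt hn1lt
  funext j
  by_cases h1 : (j:ℕ) = n
  · have hj : j = (n : Fin (2*N+2)) := Fin.ext (by omega)
    have hjne' : j ≠ ((n+1:ℕ) : Fin (2*N+2)) := by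
      intro h; apply_fun Fin.val at h; omega
    by_cases h0 : 1 ≤ (j:ℕ)
    · have hpredne : (⟨(j:ℕ)-1, lt_of_le_of_lt (Nat.sub_le _ _) j.isLt⟩ : Fin (2*N+2))
          ≠ (n : Fin (2*N+2)) := by
        intro h; apply_fun Fin.val at h; simp only [hKv] at h; omega
      simp only [Dm, flip, if_pos (⟨h0, by omega⟩ : 1 ≤ (j:ℕ) ∧ (j:ℕ) ≤ 2*N+1),
        if_neg hjne', if_pos hj, if_neg hpredne]
      exact add_right_comm _ _ _
    · simp only [Dm, flip, if_neg (by omega : ¬(1 ≤ (j:ℕ) ∧ (j:ℕ) ≤ 2*N+1)),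
        if_neg hjne', if_pos hj]
  · by_cases h2 : (j:ℕ) = n+1
    · have hj : j = ((n+1:ℕ) : Fin (2*N+2)) := Fin.ext (by omega)
      have hjne : j ≠ (n : Fin (2*N+2)) := by intro h; apply_fun Fin.val at h; omega
      have hpred : (⟨(j:ℕ)-1, lt_of_le_of_lt (Nat.sub_le _ _) j.isLt⟩ : Fin (2*N+2))
          = (n : Fin (2*N+2)) := Fin.ext (by simp only [hKv]; omega)
      simp only [Dm, flip, if_pos (show 1 ≤ (j:ℕ) ∧ (j:ℕ) ≤ 2*N+1 by omega),
        if_pos hj, if_neg hjne, hpred, eq_self_iff_true, if_true]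
      rw [add_assoc]
    · have hjne : j ≠ (n : Fin (2*N+2)) := by intro h; apply_fun Fin.val at h; omega
      have hjne' : j ≠ ((n+1:ℕ) : Fin (2*N+2)) := by intro h; apply_fun Fin.val at h; omega
      simp only [Dm, flip, if_neg hjne, if_neg hjne']
      by_cases h0 : 1 ≤ (j:ℕ)
      · have hpredne : (⟨(j:ℕ)-1, lt_of_le_of_lt (Nat.sub_le _ _) j.isLt⟩ : Fin (2*N+2))
            ≠ (n : Fin (2*N+2)) := by
          intro h; apply_fun Fin.val at h; simp only [hKv] at h; omega
        have hcond : 1 ≤ (j:ℕ) ∧ (j:ℕ) ≤ 2*N+1 := ⟨h0, by omega⟩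
        simp only [if_pos hcond, if_neg hpredne]
      · have hcond : ¬(1 ≤ (j:ℕ) ∧ (j:ℕ) ≤ 2*N+1) := by omega
        simp only [if_neg hcond]

lemma KW_X {N n : ℕ} (hn : n + 1 ≤ 2*N) :
    KW N * siteOp N (n : Fin (2*N+2)) PX
      = (siteOp N (n : Fin (2*N+2)) PZ * siteOp N ((n+1:ℕ) : Fin (2*N+2)) PZ) * KW N := by
  have hnlt : n < 2*N+2 := by omega
  have hn1lt : n+1 < 2*N+2 := by omega
  have hkk : (n : Fin (2*N+2)) ≠ ((n+1:ℕ) : Fin (2*N+2)) := by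
    intro h; apply_fun Fin.val at h
    rw [Fin.val_cast_of_lt hnlt, Fin.val_cast_of_lt hn1lt] at h; omega
  ext f g
  rw [mulX_apply, KW_apply, D_flip hn, Matrix.mul_assoc, Z_mul_apply, Z_mul_apply, KW_apply]
  set v := Dm N (2*N+1) g with hv
  have hpt : ∀ j, _root_.hadamard (f j)
        (flip N ((n+1:ℕ) : Fin (2*N+2)) (flip N (n : Fin (2*N+2)) v) j)
      = (if j = ((n+1:ℕ) : Fin (2*N+2)) then sgn (f j) else 1)
        * ((if j = (n : Fin (2*N+2)) then sgn (f j) else 1) * _root_.hadamard (f j) (v j)) := by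
    intro j
    by_cases h1 : j = ((n+1:ℕ) : Fin (2*N+2))
    · have h2 : j ≠ (n : Fin (2*N+2)) := by rw [h1]; exact Ne.symm hkk
      simp only [flip, if_pos h1, if_neg h2, H_flip]
      ring
    · by_cases h2 : j = (n : Fin (2*N+2))
      · simp only [flip, if_neg h1, if_pos h2, H_flip]
        ring
      · simp only [flip, if_neg h1, if_neg h2]
        ring
  rw [Finset.prod_congr rfl (fun j _ => hpt j), Finset.prod_mul_distrib,
    Finset.prod_mul_distrib,
    Finset.prod_ite_eq' Finset.univ ((n+1:ℕ) : Fin (2*N+2)) (fun j => sgn (f j)),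
    Finset.prod_ite_eq' Finset.univ (n : Fin (2*N+2)) (fun j => sgn (f j))]
  simp only [Finset.mem_univ, if_true]
  ring

end KWaux

/-- Kramers–Wannier identity on operators: `V X_n V† = Z_n Z_{n+1}` for all `n` with
`-N ≤ n ≤ N-1` (in shifted coordinates, `n + 1 ≤ 2N`). -/
theorem kramersWannier_conjugation (N n : ℕ) (hn : n + 1 ≤ 2 * N) :
    KW N * siteOp N (n : Fin (2 * N + 2)) PX * (KW N)ᴴ =
      siteOp N (n : Fin (2 * N + 2)) PZ * siteOp N ((n + 1 : ℕ) : Fin (2 * N + 2)) PZ := by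
  have h := KWaux.KW_X (N := N) (n := n) hn
  rw [h, Matrix.mul_assoc, KWaux.KW_mul_conj, Matrix.mul_one]
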